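/- (Guruswami–Wootters single-erasure repair, full-length case.) Let B = GF(q) with q = p^m, F = GF(q^t), and Tr the trace from F to B, and let k ≤ |F| - q^{t-1}. Let α* ∈ F. If f, g ∈ F[X] both have degree less than k, and Tr(f(α)·(α-α*)^{-1}) = Tr(g(α)·(α-α*)^{-1}) for every α ∈ F with α ≠ α*, then f(α*) = g(α*). In other words, the erased codeword symbol f(α*) of a codeword of RS(F,k) is uniquely determined by the n-1 repair traces Tr(f(α)/(α-α*)), α ≠ α*, each of which is a single sub-symbol of B. -/

import Mathlib

open Polynomial Finset

/-!
Write `q = p ^ m` and `h = f - g`, so that `Tr(h(α) / (α - α*)) = 0` for all `α ≠ α*`.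
For `u ∈ F` the repair polynomial `p_u(X) = Σᵢ u^{qⁱ} (X - α*)^{qⁱ - 1}` has degree
`q^{t-1} - 1`, satisfies `p_u(α*) = u`, and `(α - α*) p_u(α) = Tr(u (α - α*))` for every `α`.
Since `deg (h p_u) < |F| - 1`, the values of `h p_u` sum to zero over `F`. Taking traces and
using `B`-linearity of `Tr` (the factor `Tr(u (α - α*))` lies in `B`), every term with
`α ≠ α*` becomes `Tr(h(α) / (α - α*)) · Tr(u (α - α*)) = 0`, leaving `Tr(h(α*) u) = 0`
for all `u`. As `Tr` is a nonzero polynomial map of degree `q^{t-1} < |F|`, this forces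
`h(α*) = 0`. The map `x ↦ x^q`, hence `Tr`, is additive because `q ∣ |F|` makes `q` a power
of the characteristic.
-/

theorem FiniteField.sum_eval_eq_zero {K : Type*} [Field K] [Fintype K] {f : K[X]}
    (hf : f.natDegree < Fintype.card K - 1) : ∑ x : K, f.eval x = 0 := by
  simp_rw [eval_eq_sum_range' hf]
  rw [sum_comm]
  refine sum_eq_zero fun i hi => ?_
  rw [← mul_sum, FiniteField.sum_pow_lt_card_sub_one K i (mem_range.mp hi), mul_zero]

theorem FiniteField.one_lt_and_ne_zero_of_card_eq_pow {K : Type*} [Field K] [Fintype K]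
    {q t : ℕ} (h : Fintype.card K = q ^ t) : 1 < q ∧ t ≠ 0 := by
  have hcard : 1 < q ^ t := h ▸ Fintype.one_lt_card
  have ht : t ≠ 0 := by rintro rfl; simp at hcard
  exact ⟨(one_lt_pow_iff ht).1 hcard, ht⟩

theorem FiniteField.exists_expChar_pow_eq_of_card_eq_pow {K : Type*} [Field K] [Fintype K]
    {q t : ℕ} (h : Fintype.card K = q ^ t) : ∃ r j, ExpChar K r ∧ q = r ^ j := by
  obtain ⟨r, hchar, n, hr, hn⟩ := FiniteField.card' K
  obtain ⟨j, -, hj⟩ := (Nat.dvd_prime_pow hr).1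
    (hn ▸ h ▸ dvd_pow_self q (one_lt_and_ne_zero_of_card_eq_pow h).2)
  exact ⟨r, j, ExpChar.prime hr, hj⟩

section PowTrace

variable (R : Type*) [CommRing R] (r : ℕ) [ExpChar R r] (j t : ℕ)

/-- For a finite field of order `(r ^ j) ^ t` this is the trace to its subfield of order
`r ^ j`. -/
def powTrace : R →+ R :=
  ∑ i ∈ range t, (iterateFrobenius R r (j * i)).toAddMonoidHom

variable {R r j t}

theorem powTrace_apply (x : R) : powTrace R r j t x = ∑ i ∈ range t, x ^ (r ^ j) ^ i := by
  simp [powTrace, iterateFrobenius_def, pow_mul]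

theorem powTrace_mul_of_pow_eq_self {c : R} (hc : c ^ r ^ j = c) (x : R) :
    powTrace R r j t (x * c) = powTrace R r j t x * c := by
  have hci (i : ℕ) : c ^ (r ^ j) ^ i = c := by
    induction i with
    | zero => simp
    | succ i ih => rw [pow_succ, pow_mul, ih, hc]
  simp only [powTrace_apply, sum_mul, mul_pow, hci]

theorem powTrace_pow_eq_self {x : R} (hx : x ^ (r ^ j) ^ t = x) :
    powTrace R r j t x ^ r ^ j = powTrace R r j t x := by
  have hshift := (sum_range_succ' (fun i => x ^ (r ^ j) ^ i) t).symm.trans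
    (sum_range_succ _ t)
  rw [pow_zero, pow_one, hx, add_left_inj] at hshift
  rw [powTrace_apply, sum_pow_char_pow, ← hshift]
  exact sum_congr rfl fun i _ => by rw [← pow_mul, ← pow_succ]

theorem exists_powTrace_ne_zero [IsDomain R] [Fintype R] (hq : 1 < r ^ j) (ht : t ≠ 0)
    (hcard : (r ^ j) ^ (t - 1) < Fintype.card R) : ∃ y, powTrace R r j t y ≠ 0 := by
  set P : R[X] := ∑ i ∈ range t, X ^ (r ^ j) ^ i
  have hP : P.coeff 1 = 1 := by
    rw [finsetSum_coeff, sum_eq_single_of_mem 0 (mem_range.2 (Nat.pos_of_ne_zero ht))]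
    · simp
    · intro i _ hi
      rw [coeff_X_pow, if_neg (Nat.one_lt_pow hi hq).ne]
  have hdeg : P.natDegree ≤ (r ^ j) ^ (t - 1) :=
    natDegree_sum_le_of_forall_le _ _ fun i hi => by
      rw [natDegree_X_pow]
      exact Nat.pow_le_pow_right (by omega) (Nat.le_sub_one_of_lt (mem_range.1 hi))
  obtain ⟨y, hy⟩ := P.exists_eval_ne_zero_of_natDegree_lt_card
    (fun h => by simp [h] at hP) (by simpa using hdeg.trans_lt hcard)
  exact ⟨y, by simpa [P, eval_finsetSum, powTrace_apply] using hy⟩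

end PowTrace

section RepairPoly

variable {R : Type*} [CommRing R] (q t : ℕ) (a u : R)

noncomputable def repairPoly : R[X] := ∑ i ∈ range t, C (u ^ q ^ i) * (X - C a) ^ (q ^ i - 1)

theorem natDegree_repairPoly_le (hq : 0 < q) :
    (repairPoly q t a u).natDegree ≤ q ^ (t - 1) - 1 :=
  natDegree_sum_le_of_forall_le _ _ fun i hi => by
    refine (natDegree_C_mul_le _ _).trans <| natDegree_pow_le.trans ?_
    have : q ^ i ≤ q ^ (t - 1) := Nat.pow_le_pow_right hq (Nat.le_sub_one_of_lt (mem_range.1 hi))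
    exact (Nat.mul_le_mul_left _ (natDegree_X_sub_C_le a)).trans (by omega)

theorem eval_repairPoly_self (hq : 1 < q) (ht : t ≠ 0) : (repairPoly q t a u).eval a = u := by
  rw [repairPoly, eval_finsetSum, sum_eq_single_of_mem 0 (mem_range.2 (Nat.pos_of_ne_zero ht))]
  · simp
  · intro i _ hi
    have : q ^ i - 1 ≠ 0 := by have := Nat.one_lt_pow hi hq; omega
    simp [zero_pow this]

theorem sub_mul_eval_repairPoly (hq : 0 < q) (b : R) :
    (b - a) * (repairPoly q t a u).eval b = ∑ i ∈ range t, (u * (b - a)) ^ q ^ i := by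
  rw [repairPoly, eval_finsetSum, mul_sum]
  refine sum_congr rfl fun i _ => ?_
  have : (b - a) ^ q ^ i = (b - a) ^ (q ^ i - 1) * (b - a) := by
    rw [← pow_succ, Nat.sub_add_cancel (Nat.one_le_pow _ _ hq)]
  rw [eval_mul, eval_C, eval_pow, eval_sub, eval_X, eval_C, mul_pow, this]
  ring

end RepairPoly

section FiniteField

variable {F : Type*} [Field F] [Fintype F] {r : ℕ} [ExpChar F r] {j t : ℕ}

theorem eq_zero_of_forall_powTrace_mul_eq_zero (hF : Fintype.card F = (r ^ j) ^ t) {a : F}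
    (h : ∀ u, powTrace F r j t (a * u) = 0) : a = 0 := by
  obtain ⟨hq, ht⟩ := FiniteField.one_lt_and_ne_zero_of_card_eq_pow hF
  obtain ⟨y, hy⟩ := exists_powTrace_ne_zero hq ht
    (hF ▸ Nat.pow_lt_pow_right hq (Nat.sub_one_lt ht))
  by_contra ha
  exact hy (by simpa [ha] using h (a⁻¹ * y))

theorem powTrace_eval_mul_eq_zero_of_repair (hF : Fintype.card F = (r ^ j) ^ t) {h : F[X]}
    {a : F} (hdeg : h.natDegree + (r ^ j) ^ (t - 1) < Fintype.card F)
    (hrep : ∀ b ≠ a, powTrace F r j t (h.eval b * (b - a)⁻¹) = 0) (u : F) :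
    powTrace F r j t (h.eval a * u) = 0 := by
  obtain ⟨hq, ht⟩ := FiniteField.one_lt_and_ne_zero_of_card_eq_pow hF
  classical
  have hsum : ∑ b, (h * repairPoly (r ^ j) t a u).eval b = 0 := by
    refine FiniteField.sum_eval_eq_zero (natDegree_mul_le.trans_lt ?_)
    have := natDegree_repairPoly_le (r ^ j) t a u (by omega)
    have := Nat.one_le_pow (t - 1) (r ^ j) (by omega)
    omega
  have hterm : ∀ b ≠ a, powTrace F r j t ((h * repairPoly (r ^ j) t a u).eval b) = 0 := by
    intro b hb
    have hsplit : (h * repairPoly (r ^ j) t a u).eval b =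
        h.eval b * (b - a)⁻¹ * powTrace F r j t (u * (b - a)) := by
      rw [powTrace_apply, ← sub_mul_eval_repairPoly _ _ _ _ (by omega), eval_mul]
      field_simp [sub_ne_zero.2 hb]
    have hB : powTrace F r j t (u * (b - a)) ^ r ^ j = powTrace F r j t (u * (b - a)) :=
      powTrace_pow_eq_self (hF ▸ FiniteField.pow_card _)
    rw [hsplit, powTrace_mul_of_pow_eq_self hB, hrep b hb, zero_mul]
  have := congrArg (powTrace F r j t) hsum
  rwa [map_zero, map_sum, ← add_sum_erase _ _ (mem_univ a),
    sum_eq_zero fun b hb => hterm b (ne_of_mem_erase hb), add_zero, eval_mul,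
    eval_repairPoly_self _ _ _ _ hq ht] at this

theorem eval_eq_zero_of_forall_powTrace_eq_zero (hF : Fintype.card F = (r ^ j) ^ t) {h : F[X]}
    {a : F} (hdeg : h.degree < ↑(Fintype.card F - (r ^ j) ^ (t - 1)))
    (hrep : ∀ b ≠ a, powTrace F r j t (h.eval b * (b - a)⁻¹) = 0) : h.eval a = 0 := by
  rcases eq_or_ne h 0 with rfl | h0
  · exact eval_zero
  have := (natDegree_lt_iff_degree_lt h0).2 hdeg
  exact eq_zero_of_forall_powTrace_mul_eq_zero hF
    (powTrace_eval_mul_eq_zero_of_repair hF (by omega) hrep)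

end FiniteField

theorem single_erasure_repair_general (p m t k : ℕ)
    (F : Type*) [Field F] [Fintype F] (hF : Fintype.card F = (p ^ m) ^ t)
    (hk : k ≤ Fintype.card F - (p ^ m) ^ (t - 1))
    (αs : F)
    (f g : F[X]) (hf : f.degree < (k : WithBot ℕ)) (hg : g.degree < (k : WithBot ℕ))
    (hrep : ∀ α : F, α ≠ αs →
      ∑ i ∈ Finset.range t, (f.eval α * (α - αs)⁻¹) ^ ((p ^ m) ^ i) =
        ∑ i ∈ Finset.range t, (g.eval α * (α - αs)⁻¹) ^ ((p ^ m) ^ i)) :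
    f.eval αs = g.eval αs := by
  obtain ⟨r, j, _, hq⟩ := FiniteField.exists_expChar_pow_eq_of_card_eq_pow hF
  rw [hq] at hF hk hrep
  have hdeg : (f - g).degree < ↑(Fintype.card F - (r ^ j) ^ (t - 1)) :=
    ((degree_sub_le f g).trans_lt (max_lt hf hg)).trans_le (by exact_mod_cast hk)
  rw [← sub_eq_zero, ← eval_sub]
  refine eval_eq_zero_of_forall_powTrace_eq_zero hF hdeg fun b hb => ?_
  rw [eval_sub, sub_mul, map_sub, powTrace_apply, powTrace_apply, hrep b hb, sub_self]

/-- Guruswami–Wootters single-erasure repair (full-length case): the erased symbol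
`f(α*)` of a codeword of `RS(F,k)`, `k ≤ |F| - q^{t-1}`, is uniquely determined by
the repair traces `Tr(f(α)·(α-α*)⁻¹)`, `α ≠ α*`. -/
theorem single_erasure_repair (p m t k : ℕ) (hp : p.Prime) (hm : 1 ≤ m) (ht : 1 ≤ t)
    (F : Type*) [Field F] [Fintype F] (hF : Fintype.card F = (p ^ m) ^ t)
    (hk : k ≤ Fintype.card F - (p ^ m) ^ (t - 1))
    (αs : F)
    (f g : F[X]) (hf : f.degree < (k : WithBot ℕ)) (hg : g.degree < (k : WithBot ℕ))
    (hrep : ∀ α : F, α ≠ αs →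
      ∑ i ∈ Finset.range t, (f.eval α * (α - αs)⁻¹) ^ ((p ^ m) ^ i) =
        ∑ i ∈ Finset.range t, (g.eval α * (α - αs)⁻¹) ^ ((p ^ m) ^ i)) :
    f.eval αs = g.eval αs :=
  single_erasure_repair_general p m t k F hF hk αs f g hf hg hrep
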